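/- Under the Hypothesis on the noise family g_{γ₁} and for the Maxwellian Fourier dynamics, the uniform distribution, with Fourier coefficients a₀ = 1 and a_k = 0 for k ≥ 1, is a stationary solution; it is linearly stable for γ₁ < π/4 and linearly unstable for γ₁ > π/4. -/

import Mathlib

/- Only the first mode can destabilize the uniform state: its eigenvalue is `4γ₁/π - 1`, while for
`k ≥ 2` the bound `|Γ(k/2)| ≤ 2/(πk) ≤ 1/π` together with `|γ_k| ≤ 1` keeps `2γ_kΓ(k/2)` below `2/π < 1`. -/

open Real

/-- Maxwellian kernel transform: `Γ(u) = sin(πu)/(πu)` for `u ≠ 0`, `Γ(0) = 1`. -/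
noncomputable def Gam (u : ℝ) : ℝ :=
  if u = 0 then 1 else Real.sin (π * u) / (π * u)

lemma Gam_one_half : Gam (1 / 2) = 2 / π := by
  rw [Gam, if_neg (by norm_num), mul_one_div, sin_pi_div_two, one_div_div]

lemma abs_Gam_le {u : ℝ} (hu : 0 < u) : |Gam u| ≤ (π * u)⁻¹ := by
  have hπu : 0 < π * u := mul_pos pi_pos hu
  rw [Gam, if_neg hu.ne', abs_div, abs_of_pos hπu, div_eq_mul_inv]
  exact mul_le_of_le_one_left (inv_nonneg.2 hπu.le) (abs_sin_le_one _)

lemma two_mul_mul_Gam_lt_one {c u : ℝ} (hc : |c| ≤ 1) (hu : 1 ≤ u) : 2 * c * Gam u < 1 :=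
  calc 2 * c * Gam u ≤ 2 * (|c| * |Gam u|) := by
        rw [mul_assoc, ← abs_mul]; exact mul_le_mul_of_nonneg_left (le_abs_self _) two_pos.le
    _ ≤ 2 * (1 * π⁻¹) := by
        gcongr
        calc |Gam u| ≤ (π * u)⁻¹ := abs_Gam_le (by linarith)
          _ ≤ π⁻¹ := inv_anti₀ pi_pos (le_mul_of_one_le_right pi_pos.le hu)
    _ < 1 := by
        rw [one_mul, ← div_eq_mul_inv, div_lt_one pi_pos]; linarith [pi_gt_three]

lemma two_mul_mul_Gam_one_half_sub_one (s : ℝ) : 2 * s * Gam (1 / 2) - 1 = 4 * s / π - 1 := by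
  rw [Gam_one_half]; ring

lemma maxwellian_rhs_uniform_eq_zero {k : ℕ} (hk : 1 ≤ k) (c : ℝ) :
    let unif : ℕ → ℝ := fun n => if n = 0 then 1 else 0
    (2 * c * Gam ((k : ℝ) / 2) - 1) * unif k
      + c * (∑ n ∈ Finset.Ico 1 k, Gam ((n : ℝ) - (k : ℝ) / 2) * unif n * unif (k - n))
      + 2 * c * (∑' m : ℕ, Gam (((k : ℝ) + 1 + (m : ℝ)) - (k : ℝ) / 2)
          * unif (k + 1 + m) * unif (m + 1)) = 0 := by
  have hkn : ∀ n ∈ Finset.Ico 1 k, k - n ≠ 0 := fun n hn => by grind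
  simp +contextual [Nat.one_le_iff_ne_zero.1 hk, Finset.sum_eq_zero, hkn]

theorem stmt_12
    (N : ℕ)
    (γ : ℕ → ℝ → ℝ)
    (hγ1 : ∀ s, γ 1 s = s)
    (hγhigh : ∀ k, N < k → ∀ s, γ k s = 0)
    (hγrange : ∀ k, 2 ≤ k → k ≤ N → ∀ s ∈ Set.Icc (0 : ℝ) 1, γ k s ∈ Set.Icc (-1 : ℝ) 1)
    (γ₁ : ℝ) (hγ₁ : γ₁ ∈ Set.Icc (0 : ℝ) 1)
    (unif : ℕ → ℝ) (hunif : unif = fun k => if k = 0 then 1 else 0) :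
    (∀ k : ℕ, 1 ≤ k →
      (2 * γ k γ₁ * Gam ((k : ℝ) / 2) - 1) * unif k
        + γ k γ₁ * (∑ n ∈ Finset.Ico 1 k, Gam ((n : ℝ) - (k : ℝ) / 2) * unif n * unif (k - n))
        + 2 * γ k γ₁ * (∑' m : ℕ, Gam (((k : ℝ) + 1 + (m : ℝ)) - (k : ℝ) / 2)
            * unif (k + 1 + m) * unif (m + 1)) = 0) ∧
    (γ₁ < π / 4 → ∀ k : ℕ, 1 ≤ k → 2 * γ k γ₁ * Gam ((k : ℝ) / 2) - 1 < 0) ∧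
    (π / 4 < γ₁ → ∃ k : ℕ, 1 ≤ k ∧ 0 < 2 * γ k γ₁ * Gam ((k : ℝ) / 2) - 1) := by
  have eigenvalue_one : 2 * γ 1 γ₁ * Gam (((1 : ℕ) : ℝ) / 2) - 1 = 4 * γ₁ / π - 1 := by
    rw [hγ1, Nat.cast_one, two_mul_mul_Gam_one_half_sub_one]
  have abs_γ_le_one : ∀ k, 2 ≤ k → |γ k γ₁| ≤ 1 := fun k hk => by
    rcases le_or_gt k N with hkN | hkN
    · exact abs_le.2 (hγrange k hk hkN γ₁ hγ₁)
    · simp [hγhigh k hkN]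
  subst hunif
  refine ⟨fun k hk => maxwellian_rhs_uniform_eq_zero hk _, fun hγ₁π k hk => ?_, fun hγ₁π => ?_⟩
  · rcases hk.eq_or_lt with rfl | hk2
    · rw [eigenvalue_one, sub_neg, div_lt_one pi_pos]; linarith
    · have hk2' : (2 : ℝ) ≤ k := by exact_mod_cast hk2
      linarith [two_mul_mul_Gam_lt_one (abs_γ_le_one k hk2) (by linarith : (1 : ℝ) ≤ k / 2)]
  · refine ⟨1, le_rfl, ?_⟩
    rw [eigenvalue_one, sub_pos, one_lt_div pi_pos]; linarith
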